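/- Let x ∈ Z_q^n have Hamming weight w and exactly m runs of zeros of length ≥ k. For 0 ≤ s ≤ t with t - s ≤ m - s, the number of distinct strings obtainable from x by first inserting s blocks 0^k and then deleting t-s blocks 0^k is at least C(w+s, s) · C(m-s, t-s), and all such strings have length n + k(2s - t). -/

import Mathlib

/-- The Hamming weight of a string over `ℤ_q`. -/
def wt (q : ℕ) (x : List (ZMod q)) : ℕ := x.countP fun a => decide (a ≠ 0)

/-- The list `[r_0(x), …, r_w(x)]` of lengths of the runs of zeros of `x`. -/
def zeroRuns (q : ℕ) : List (ZMod q) → List ℕ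
  | [] => [0]
  | a :: rest =>
    if a = 0 then
      match zeroRuns q rest with
      | r :: rs => (r + 1) :: rs
      | [] => [1]
    else 0 :: zeroRuns q rest

/-- One insertion of a block `0^k` at some position of the string `x`. -/
def Ins (q k : ℕ) (x y : List (ZMod q)) : Prop :=
  ∃ j ≤ x.length, y = x.take j ++ List.replicate k (0 : ZMod q) ++ x.drop j

/-- One deletion of a block of `k` consecutive zeros. -/
def Del (q k : ℕ) (x y : List (ZMod q)) : Prop := Ins q k y x

/-- `u` successive insertions of blocks `0^k`. -/
def InsN (q k : ℕ) : ℕ → List (ZMod q) → List (ZMod q) → Prop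
  | 0, x, y => y = x
  | u + 1, x, y => ∃ z, Ins q k x z ∧ InsN q k u z y

/-- `u` successive deletions of blocks `0^k`. -/
def DelN (q k : ℕ) : ℕ → List (ZMod q) → List (ZMod q) → Prop
  | 0, x, y => y = x
  | u + 1, x, y => ∃ z, Del q k x z ∧ DelN q k u z y

/-!
A string is determined by its nonzero letters `cs` and its vector `r` of zero-run lengths, and
inserting (deleting) a block `0^k` in run `i` adds `k` to (subtracts `k` from) `r i`. An insertion
pattern is a multiset `σ` of `s` runs (`C(w+s, s)` choices); a deletion set is a set `D` of
`t - s` runs of length `≥ k` outside `σ` (at least `C(m-s, t-s)` choices). The resulting run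
vectors `r + kσ - k·1_D` are pairwise distinct: on `D` the entry drops below `r i`, elsewhere it
is `r i + k·σ(i)`, so `D` and then `σ` can be read off.
-/

open Function Finset

lemma List.countP_ofFn {α : Type*} {n : ℕ} (p : α → Bool) (f : Fin n → α) :
    (List.ofFn f).countP p = #{i | p (f i)} := by
  induction n with
  | zero => simp
  | succ n ih =>
    rw [List.ofFn_succ, List.countP_cons, ih, card_filter, card_filter, Fin.sum_univ_succ, add_comm]

section

variable {q k : ℕ}

def ofZeroRuns : (cs : List (ZMod q)) → (Fin (cs.length + 1) → ℕ) → List (ZMod q)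
  | [], r => List.replicate (r 0) 0
  | c :: cs, r => List.replicate (r 0) 0 ++ c :: ofZeroRuns cs (Fin.tail r)

lemma zeroRuns_replicate_append {l : List (ZMod q)} {v : ℕ} {vs : List ℕ}
    (h : zeroRuns q l = v :: vs) (n : ℕ) :
    zeroRuns q (List.replicate n 0 ++ l) = (n + v) :: vs := by
  induction n with
  | zero => simpa using h
  | succ n ih => simp [List.replicate_succ, zeroRuns, ih, Nat.add_right_comm]

lemma zeroRuns_ofZeroRuns {cs : List (ZMod q)} (hcs : ∀ c ∈ cs, c ≠ 0)
    (r : Fin (cs.length + 1) → ℕ) : zeroRuns q (ofZeroRuns cs r) = List.ofFn r := by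
  induction cs with
  | nil =>
    simpa [ofZeroRuns] using zeroRuns_replicate_append (l := ([] : List (ZMod q))) rfl (r 0)
  | cons c cs ih =>
    have hc : zeroRuns q (c :: ofZeroRuns cs (Fin.tail r)) = 0 :: List.ofFn (Fin.tail r) := by
      simp [zeroRuns, hcs c List.mem_cons_self,
        ih fun c' hc' => hcs c' (List.mem_cons_of_mem _ hc')]
    simp [ofZeroRuns, zeroRuns_replicate_append hc, List.ofFn_succ, Fin.tail]

lemma wt_ofZeroRuns {cs : List (ZMod q)} (hcs : ∀ c ∈ cs, c ≠ 0)
    (r : Fin (cs.length + 1) → ℕ) : wt q (ofZeroRuns cs r) = cs.length := by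
  induction cs with
  | nil => simp [ofZeroRuns, wt, List.countP_replicate]
  | cons c cs ih =>
    have := ih (fun c' hc' => hcs c' (List.mem_cons_of_mem _ hc')) (Fin.tail r)
    simp_all [ofZeroRuns, wt, List.countP_append, List.countP_replicate]

lemma ofZeroRuns_update_zero_add_one (cs : List (ZMod q)) (r : Fin (cs.length + 1) → ℕ) :
    ofZeroRuns cs (update r 0 (r 0 + 1)) = 0 :: ofZeroRuns cs r := by
  cases cs <;> simp [ofZeroRuns, Fin.tail_update_zero, List.replicate_succ]

lemma exists_eq_ofZeroRuns (x : List (ZMod q)) :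
    ∃ (cs : List (ZMod q)) (r : Fin (cs.length + 1) → ℕ),
      (∀ c ∈ cs, c ≠ 0) ∧ ofZeroRuns cs r = x := by
  induction x with
  | nil => exact ⟨[], 0, by simp, rfl⟩
  | cons a x ih =>
    obtain ⟨cs, r, hcs, rfl⟩ := ih
    by_cases ha : a = 0
    · exact ⟨cs, update r 0 (r 0 + 1), hcs, by rw [ha, ofZeroRuns_update_zero_add_one]⟩
    · refine ⟨a :: cs, Fin.cons 0 r, ?_, by simp [ofZeroRuns]⟩
      simpa [ha] using hcs

lemma Ins.append_left {x y : List (ZMod q)} (h : Ins q k x y) (l : List (ZMod q)) :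
    Ins q k (l ++ x) (l ++ y) := by
  obtain ⟨j, hj, rfl⟩ := h
  exact ⟨l.length + j, by simp [hj], by simp [List.take_length_add_append]⟩

lemma Ins.length_eq {x y : List (ZMod q)} (h : Ins q k x y) : y.length = x.length + k := by
  obtain ⟨j, hj, rfl⟩ := h
  simp only [List.length_append, List.length_take, List.length_replicate, List.length_drop]
  omega

lemma InsN.length_eq {u : ℕ} {x y : List (ZMod q)} (h : InsN q k u x y) :
    y.length = x.length + k * u := by
  induction u generalizing x with
  | zero => simp [h.symm]
  | succ u ih =>
    obtain ⟨z, hxz, hzy⟩ := h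
    rw [ih hzy, hxz.length_eq, Nat.mul_succ]
    omega

lemma DelN.length_eq {u : ℕ} {x y : List (ZMod q)} (h : DelN q k u x y) :
    x.length = y.length + k * u := by
  induction u generalizing x with
  | zero => obtain rfl : y = x := h; rfl
  | succ u ih =>
    obtain ⟨z, hxz, hzy⟩ := h
    rw [Ins.length_eq hxz, ih hzy, Nat.mul_succ]
    omega

lemma length_of_insN_delN {s u : ℕ} {x z y : List (ZMod q)} (hxz : InsN q k s x z)
    (hzy : DelN q k u z y) : y.length + k * u = x.length + k * s := by
  rw [← hxz.length_eq, hzy.length_eq]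

lemma ins_replicate_append (n : ℕ) (l : List (ZMod q)) :
    Ins q k (List.replicate n 0 ++ l) (List.replicate (n + k) 0 ++ l) :=
  ⟨0, Nat.zero_le _, by
    rw [List.take_zero, List.drop_zero, List.nil_append, add_comm, List.replicate_add,
      List.append_assoc]⟩

lemma ins_ofZeroRuns_update (cs : List (ZMod q)) (r : Fin (cs.length + 1) → ℕ)
    (j : Fin (cs.length + 1)) :
    Ins q k (ofZeroRuns cs r) (ofZeroRuns cs (update r j (r j + k))) := by
  induction cs with
  | nil =>
    obtain rfl := Fin.fin_one_eq_zero j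
    simpa [ofZeroRuns] using ins_replicate_append (k := k) (r 0) ([] : List (ZMod q))
  | cons c cs ih =>
    cases j using Fin.cases with
    | zero => simpa [ofZeroRuns, Fin.tail_update_zero] using ins_replicate_append (r 0) _
    | succ j =>
      have h := (ih (Fin.tail r) j).append_left (List.replicate (r 0) 0 ++ [c])
      simp only [List.append_assoc, List.singleton_append] at h
      simp only [ofZeroRuns, Fin.tail_update_succ, update_of_ne (Fin.succ_ne_zero j).symm]
      exact h

lemma del_ofZeroRuns_update (cs : List (ZMod q)) {r : Fin (cs.length + 1) → ℕ}
    {j : Fin (cs.length + 1)} (hj : k ≤ r j) :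
    Del q k (ofZeroRuns cs r) (ofZeroRuns cs (update r j (r j - k))) := by
  have := ins_ofZeroRuns_update (k := k) cs (update r j (r j - k)) j
  rwa [update_self, update_idem, Nat.sub_add_cancel hj, update_eq_self] at this

def insertRuns {n : ℕ} (k : ℕ) (r : Fin n → ℕ) (σ : Multiset (Fin n)) : Fin n → ℕ :=
  fun i => r i + k * σ.count i

def deleteRuns {n : ℕ} (k : ℕ) (r : Fin n → ℕ) (D : Finset (Fin n)) : Fin n → ℕ :=
  fun i => if i ∈ D then r i - k else r i

lemma insN_ofZeroRuns_insertRuns (cs : List (ZMod q)) (r : Fin (cs.length + 1) → ℕ)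
    (σ : Multiset (Fin (cs.length + 1))) :
    InsN q k (Multiset.card σ) (ofZeroRuns cs r) (ofZeroRuns cs (insertRuns k r σ)) := by
  induction σ using Multiset.induction_on generalizing r with
  | empty =>
    show ofZeroRuns cs _ = _
    congr 1
  | cons j σ ih =>
    rw [Multiset.card_cons]
    refine ⟨_, ins_ofZeroRuns_update cs r j, ?_⟩
    convert ih (update r j (r j + k)) using 2
    funext i
    rcases eq_or_ne i j with rfl | hij
    · simp [insertRuns, mul_add, add_assoc, add_comm k]
    · simp [insertRuns, hij, Multiset.count_cons_of_ne]

lemma delN_ofZeroRuns_deleteRuns (cs : List (ZMod q)) (r : Fin (cs.length + 1) → ℕ)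
    (D : Finset (Fin (cs.length + 1))) (hD : ∀ i ∈ D, k ≤ r i) :
    DelN q k #D (ofZeroRuns cs r) (ofZeroRuns cs (deleteRuns k r D)) := by
  induction D using Finset.induction_on generalizing r with
  | empty =>
    show ofZeroRuns cs _ = _
    congr 1
  | insert j D hjD ih =>
    rw [card_insert_of_notMem hjD]
    refine ⟨_, del_ofZeroRuns_update cs (hD j (mem_insert_self j D)), ?_⟩
    have hD' : ∀ i ∈ D, k ≤ update r j (r j - k) i := fun i hi => by
      rw [update_of_ne (ne_of_mem_of_not_mem hi hjD)]
      exact hD i (mem_insert_of_mem hi)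
    convert ih (update r j (r j - k)) hD' using 2
    funext i
    rcases eq_or_ne i j with rfl | hij
    · simp [deleteRuns, hjD]
    · simp [deleteRuns, hij]

lemma deleteRuns_insertRuns_inj {n : ℕ} (hk : 0 < k) (r : Fin n → ℕ)
    {σ σ' : Multiset (Fin n)} {D D' : Finset (Fin n)}
    (hD : ∀ i ∈ D, k ≤ r i ∧ i ∉ σ) (hD' : ∀ i ∈ D', k ≤ r i ∧ i ∉ σ')
    (h : deleteRuns k (insertRuns k r σ) D = deleteRuns k (insertRuns k r σ') D') :
    σ = σ' ∧ D = D' := by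
  have key : ∀ i, (i ∈ D ↔ i ∈ D') ∧ σ.count i = σ'.count i := fun i => by
    have hi := congrFun h i
    simp only [deleteRuns, insertRuns] at hi
    by_cases h1 : i ∈ D <;> by_cases h2 : i ∈ D' <;>
      simp only [h1, h2, if_true, if_false, iff_self, true_and] at hi ⊢
    · simp [Multiset.count_eq_zero.2 (hD i h1).2, Multiset.count_eq_zero.2 (hD' i h2).2]
    · have := hD i h1
      simp [Multiset.count_eq_zero.2 this.2] at hi
      omega
    · have := hD' i h2
      simp [Multiset.count_eq_zero.2 this.2] at hi
      omega
    · exact Nat.eq_of_mul_eq_mul_left hk (Nat.add_left_cancel hi)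
  exact ⟨Multiset.ext.2 fun i => (key i).2, Finset.ext fun i => (key i).1⟩

lemma choose_mul_choose_le_card_sigma {α : Type*} [Fintype α] [DecidableEq α] (S : Finset α)
    (s u : ℕ) :
    (Fintype.card α + s - 1).choose s * (#S - s).choose u ≤
      #(univ.sigma fun σ : Sym α s => (S \ (σ : Multiset α).toFinset).powersetCard u) := by
  rw [card_sigma, ← Sym.card_sym_eq_choose, ← card_univ, ← smul_eq_mul, ← sum_const]
  gcongr with σ
  rw [card_powersetCard]
  apply Nat.choose_le_choose
  calc #S - s ≤ #S - #(σ : Multiset α).toFinset := by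
        gcongr
        simpa using Multiset.toFinset_card_le (σ : Multiset α)
    _ ≤ #(S \ (σ : Multiset α).toFinset) := le_card_sdiff _ _

theorem choose_mul_choose_le_ncard_insN_delN [NeZero q] (hk : 0 < k) {cs : List (ZMod q)}
    (hcs : ∀ c ∈ cs, c ≠ 0) (r : Fin (cs.length + 1) → ℕ) (s u : ℕ) :
    (cs.length + s).choose s * (#{i | k ≤ r i} - s).choose u ≤
      {y | ∃ z, InsN q k s (ofZeroRuns cs r) z ∧ DelN q k u z y}.ncard := by
  set T := univ.sigma fun σ : Sym (Fin (cs.length + 1)) s =>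
    (({i | k ≤ r i} : Finset _) \ (σ : Multiset _).toFinset).powersetCard u
  have hT : ∀ p ∈ T, #p.2 = u ∧ ∀ i ∈ p.2, k ≤ r i ∧ i ∉ (p.1 : Multiset _) := by
    intro p hp
    simp only [T, mem_sigma, mem_powersetCard] at hp
    refine ⟨hp.2.2, fun i hi => ?_⟩
    simpa using hp.2.1 hi
  calc (cs.length + s).choose s * (#{i | k ≤ r i} - s).choose u
      = (Fintype.card (Fin (cs.length + 1)) + s - 1).choose s * _ := by simp
    _ ≤ #T := choose_mul_choose_le_card_sigma _ s u
    _ ≤ _ := by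
      rw [← Set.ncard_coe_finset]
      refine Set.ncard_le_ncard_of_injOn
        (fun p => ofZeroRuns cs (deleteRuns k (insertRuns k r p.1) p.2)) ?_ ?_ ?_
      · rintro ⟨σ, D⟩ hp
        obtain ⟨rfl, hD⟩ := hT _ hp
        refine ⟨_, by simpa using insN_ofZeroRuns_insertRuns (k := k) cs r σ, ?_⟩
        refine delN_ofZeroRuns_deleteRuns cs _ D fun i hi => ?_
        exact (hD i hi).1.trans (Nat.le_add_right _ _)
      · rintro ⟨σ, D⟩ hp ⟨σ', D'⟩ hp' h
        have h' := congrArg (zeroRuns q) h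
        simp only [zeroRuns_ofZeroRuns hcs, List.ofFn_inj] at h'
        obtain ⟨hσ, rfl⟩ := deleteRuns_insertRuns_inj hk r (hT _ hp).2 (hT _ hp').2 h'
        obtain rfl : σ = σ' := Sym.coe_injective hσ
        rfl
      · refine (List.finite_length_eq (ZMod q)
          ((ofZeroRuns cs r).length + k * s - k * u)).subset ?_
        rintro y ⟨z, hxz, hzy⟩
        have := length_of_insN_delN hxz hzy
        show y.length = _
        omega

end

theorem stmt9_general (q k s t n w m : ℕ) (hq : 2 ≤ q) (hk : 1 ≤ k)
    (x : List (ZMod q)) (hx : x.length = n) (hw : wt q x = w)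
    (hm : (zeroRuns q x).countP (fun r => decide (k ≤ r)) = m) :
    Nat.choose (w + s) s * Nat.choose (m - s) (t - s) ≤
      {y | ∃ z, InsN q k s x z ∧ DelN q k (t - s) z y}.ncard ∧
    ∀ y, (∃ z, InsN q k s x z ∧ DelN q k (t - s) z y) →
      y.length + k * (t - s) = n + k * s := by
  have : NeZero q := ⟨by omega⟩
  obtain ⟨cs, r, hcs, rfl⟩ := exists_eq_ofZeroRuns x
  rw [wt_ofZeroRuns hcs] at hw
  rw [zeroRuns_ofZeroRuns hcs, List.countP_ofFn] at hm
  subst hx hw hm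
  exact ⟨by simpa using choose_mul_choose_le_ncard_insN_delN hk hcs r s (t - s),
    fun y ⟨z, hxz, hzy⟩ => length_of_insN_delN hxz hzy⟩

/-- if `x ∈ (ℤ_q)^n` has weight `w` and exactly `m` runs of zeros of
length `≥ k`, and `0 ≤ s ≤ t`, `t - s ≤ m - s`, then the number of strings
obtainable from `x` by `s` insertions followed by `t-s` deletions of blocks `0^k`
is at least `C(w+s,s)·C(m-s,t-s)`, and all such strings have length `n + k(2s-t)`. -/
theorem stmt9 (q k s t n w m : ℕ) (hq : 2 ≤ q) (hk : 1 ≤ k)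
    (hst : s ≤ t)
    (x : List (ZMod q)) (hx : x.length = n) (hw : wt q x = w)
    (hm : (zeroRuns q x).countP (fun r => decide (k ≤ r)) = m)
    (hsm : s ≤ m) (htm : t - s ≤ m - s) :
    Nat.choose (w + s) s * Nat.choose (m - s) (t - s) ≤
      {y | ∃ z, InsN q k s x z ∧ DelN q k (t - s) z y}.ncard ∧
    ∀ y, (∃ z, InsN q k s x z ∧ DelN q k (t - s) z y) →
      y.length + k * (t - s) = n + k * s :=
  stmt9_general q k s t n w m hq hk x hx hw hm
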